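/- Let S̄ ⊆ Ω with |S̄| = v − s, where Ω is the set of vectors in (Z_4)^n with first odd entry 1. Define F_3 = 3·2^n Σ_{u ∈ Δ_0} σ̄_u² + Σ_{u ∈ (Z_4)^n} σ̄_u³, where σ̄_u = Σ_{g ∈ S̄} (i^{u·g} + i^{-u·g}) and Δ_0 is the set of all-even vectors. Then F_3 ≤ 3·2^{2n+2}(v − s)², with equality if and only if S̄ is even (every pairwise sum of elements of S̄ has all entries even). -/

import Mathlib

/-!
Since the units of `ℤ₄` are `±1`, `σ̄_u = ∑_{g ∈ S̄} ∑_{e ∈ ℤ₄ˣ} i^{u·(e g)}`, so by orthogonality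
of characters `∑_{u ∈ Δ₀} σ̄_u² = 2ⁿ · 4E`, where `E` counts the ordered pairs of `S̄` with even
sum (multiplying by units does not change parity), and `∑_u σ̄_u³ = 4ⁿ · N`, where `N` counts the
triples `(e_j g_j)` summing to zero. Such a triple is determined by `g₁, g₂` and the units, and
`g₁ + g₂` is not even because `g₃` has an odd entry; hence `N ≤ 8C` with `C = |S̄|² - E` the
number of odd pairs. Thus `F₃ = 4ⁿ (12E + N) ≤ 4ⁿ · 12(E + C)`, with equality iff `C = 0`.
-/

open Complex Finset

noncomputable def ipow (a : ZMod 4) : ℂ := Complex.I ^ a.val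

def isOddZ4 (a : ZMod 4) : Prop := a = 1 ∨ a = 3

instance : DecidablePred isOddZ4 := fun a => by unfold isOddZ4; infer_instance

/-- `g` has an odd entry and its first (lowest-index) odd entry equals 1. -/
def inOmega {n : ℕ} (g : Fin n → ZMod 4) : Prop :=
  ∃ i : Fin n, g i = 1 ∧ ∀ j : Fin n, j < i → ¬ isOddZ4 (g j)

instance {n : ℕ} : DecidablePred (inOmega (n := n)) := fun g => by
  unfold inOmega; infer_instance

def allEven {n : ℕ} (u : Fin n → ZMod 4) : Prop := ∀ i, u i = 0 ∨ u i = 2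

instance {n : ℕ} : DecidablePred (allEven (n := n)) := fun u => by
  unfold allEven; infer_instance

def dot4 {n : ℕ} (u w : Fin n → ZMod 4) : ZMod 4 := ∑ i, u i * w i

section

variable {n : ℕ}

lemma ipow_add (a b : ZMod 4) : ipow (a + b) = ipow a * ipow b := by
  rw [ipow, ipow, ipow, ← pow_add, ZMod.val_add, ← Nat.mod_add_div (a.val + b.val) 4, pow_add,
    pow_mul]
  simp

lemma ipow_sum {ι : Type*} (s : Finset ι) (f : ι → ZMod 4) :
    ipow (∑ i ∈ s, f i) = ∏ i ∈ s, ipow (f i) := by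
  induction s using Finset.cons_induction with
  | empty => simp [ipow]
  | cons a s ha ih => rw [sum_cons, prod_cons, ipow_add, ih]

lemma zmod4_cases (x : ZMod 4) : x = 0 ∨ x = 1 ∨ x = 2 ∨ x = 3 := by revert x; decide

lemma sum_ipow_mul (c : ZMod 4) : ∑ a : ZMod 4, ipow (a * c) = if c = 0 then 4 else 0 := by
  rw [show (univ : Finset (ZMod 4)) = {0, 1, 2, 3} by decide]
  rcases zmod4_cases c with rfl | rfl | rfl | rfl <;>
    simp +decide [ipow, ZMod.val_mul, ZMod.val_ofNat, ZMod.val_one, pow_succ]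

lemma sum_zero_two_ipow_mul (c : ZMod 4) :
    ∑ a ∈ {0, 2}, ipow (a * c) = if c = 0 ∨ c = 2 then 2 else 0 := by
  rcases zmod4_cases c with rfl | rfl | rfl | rfl <;>
    simp +decide [ipow, ZMod.val_mul, ZMod.val_ofNat, pow_succ, one_add_one_eq_two]

lemma dot4_sum {ι : Type*} (u : Fin n → ZMod 4) (s : Finset ι) (v : ι → Fin n → ZMod 4) :
    dot4 u (∑ i ∈ s, v i) = ∑ i ∈ s, dot4 u (v i) :=
  dotProduct_sum u s v

lemma sum_piFinset_ipow_dot4 (s : Finset (ZMod 4)) (h : Fin n → ZMod 4) :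
    ∑ u ∈ Fintype.piFinset fun _ => s, ipow (dot4 u h) = ∏ i, ∑ a ∈ s, ipow (a * h i) := by
  simp only [dot4, ipow_sum]
  exact sum_prod_piFinset s fun i a => ipow (a * h i)

lemma sum_ipow_dot4 (h : Fin n → ZMod 4) :
    ∑ u, ipow (dot4 u h) = if h = 0 then 4 ^ n else 0 := by
  rw [← Fintype.piFinset_univ, sum_piFinset_ipow_dot4]
  simp only [sum_ipow_mul, Fintype.prod_ite_zero, prod_const, card_univ, Fintype.card_fin,
    funext_iff, Pi.zero_apply]

lemma filter_allEven_eq_piFinset :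
    univ.filter (allEven (n := n)) = Fintype.piFinset fun _ => {0, 2} := by
  ext u
  simp [allEven]

lemma sum_allEven_ipow_dot4 (h : Fin n → ZMod 4) :
    ∑ u ∈ univ.filter allEven, ipow (dot4 u h) = if allEven h then 2 ^ n else 0 := by
  rw [filter_allEven_eq_piFinset, sum_piFinset_ipow_dot4]
  simp only [sum_zero_two_ipow_mul, Fintype.prod_ite_zero, prod_const, card_univ,
    Fintype.card_fin, allEven]

section PowerSums

variable {ι : Type*} (s : Finset ι) (x : ι → Fin n → ZMod 4)

lemma pow_sum_ipow_dot4 (k : ℕ) (u : Fin n → ZMod 4) :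
    (∑ p ∈ s, ipow (dot4 u (x p))) ^ k
      = ∑ t ∈ Fintype.piFinset fun _ : Fin k => s, ipow (dot4 u (∑ i, x (t i))) := by
  simp only [sum_pow', dot4_sum, ipow_sum]

lemma sum_pow_sum_ipow_dot4 (k : ℕ) :
    ∑ u, (∑ p ∈ s, ipow (dot4 u (x p))) ^ k
      = 4 ^ n * #{t ∈ Fintype.piFinset fun _ : Fin k => s | ∑ i, x (t i) = 0} := by
  simp only [pow_sum_ipow_dot4]
  rw [sum_comm]
  simp only [sum_ipow_dot4, sum_ite, sum_const_zero, add_zero, sum_const, nsmul_eq_mul, mul_comm]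

lemma sum_allEven_pow_sum_ipow_dot4 (k : ℕ) :
    ∑ u ∈ univ.filter allEven, (∑ p ∈ s, ipow (dot4 u (x p))) ^ k
      = 2 ^ n * #{t ∈ Fintype.piFinset fun _ : Fin k => s | allEven (∑ i, x (t i))} := by
  simp only [pow_sum_ipow_dot4]
  rw [sum_comm]
  simp only [sum_allEven_ipow_dot4, sum_ite, sum_const_zero, add_zero, sum_const, nsmul_eq_mul,
    mul_comm]

end PowerSums

lemma univ_units_zmod4 : (univ : Finset (ZMod 4)ˣ) = {1, -1} := by decide

lemma card_units_zmod4 : Fintype.card (ZMod 4)ˣ = 2 := by decide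

lemma sum_ipow_dot4_add_neg_eq_sum_units (S : Finset (Fin n → ZMod 4)) (u : Fin n → ZMod 4) :
    ∑ g ∈ S, (ipow (dot4 u g) + ipow (-(dot4 u g)))
      = ∑ p ∈ S ×ˢ (univ : Finset (ZMod 4)ˣ), ipow (dot4 u (p.2 • p.1)) := by
  rw [sum_product, univ_units_zmod4]
  refine sum_congr rfl fun g _ => ?_
  rw [sum_pair (by decide)]
  simp [Units.smul_def, dot4]

lemma allEven_iff_two_smul_eq_zero (v : Fin n → ZMod 4) : allEven v ↔ (2 : ZMod 4) • v = 0 := by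
  have pointwise : ∀ a : ZMod 4, (a = 0 ∨ a = 2) ↔ 2 * a = 0 := by decide
  simp only [allEven, pointwise, funext_iff, Pi.smul_apply, smul_eq_mul, Pi.zero_apply]

lemma allEven_sum_units_smul_iff {ι : Type*} (s : Finset ι) (e : ι → (ZMod 4)ˣ)
    (g : ι → Fin n → ZMod 4) : allEven (∑ i ∈ s, e i • g i) ↔ allEven (∑ i ∈ s, g i) := by
  have two_mul_unit : ∀ e : (ZMod 4)ˣ, (2 : ZMod 4) * e = 2 := by decide
  simp only [allEven_iff_two_smul_eq_zero, smul_sum, Units.smul_def, smul_smul, two_mul_unit]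

lemma allEven_units_smul_iff (e : (ZMod 4)ˣ) (g : Fin n → ZMod 4) :
    allEven (e • g) ↔ allEven g := by
  simpa using allEven_sum_units_smul_iff (univ : Finset (Fin 1)) (fun _ => e) (fun _ => g)

lemma allEven_neg_iff (v : Fin n → ZMod 4) : allEven (-v) ↔ allEven v := by
  simp only [allEven_iff_two_smul_eq_zero, smul_neg, neg_eq_zero]

lemma not_allEven_of_isOddZ4 {v : Fin n → ZMod 4} {i : Fin n} (hi : isOddZ4 (v i)) :
    ¬ allEven v := fun h => by
  have pointwise : ∀ a : ZMod 4, isOddZ4 a → ¬ (a = 0 ∨ a = 2) := by decide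
  exact pointwise _ hi (h i)

section Counting

variable (S : Finset (Fin n → ZMod 4))

lemma card_allEven_units_smul (k : ℕ) :
    #{t ∈ Fintype.piFinset (fun _ : Fin k => S ×ˢ (univ : Finset (ZMod 4)ˣ)) |
        allEven (∑ i, (t i).2 • (t i).1)}
      = 2 ^ k * #{g ∈ Fintype.piFinset (fun _ : Fin k => S) | allEven (∑ i, g i)} := by
  simp only [allEven_sum_units_smul_iff]
  calc _ = #({g ∈ Fintype.piFinset (fun _ : Fin k => S) | allEven (∑ i, g i)} ×ˢ
          (univ : Finset (Fin k → (ZMod 4)ˣ))) := by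
        refine card_nbij' (fun t => (fun i => (t i).1, fun i => (t i).2))
          (fun p i => (p.1 i, p.2 i)) ?_ ?_ (fun _ _ => rfl) (fun _ _ => rfl)
        · intro t ht
          simp_all [Fintype.mem_piFinset]
        · intro p hp
          simp_all [Fintype.mem_piFinset]
    _ = _ := by
      rw [card_product, card_univ, Fintype.card_fun, card_units_zmod4, Fintype.card_fin, mul_comm]

lemma card_sum_units_smul_eq_zero_le (hS : ∀ g ∈ S, ∃ i, isOddZ4 (g i)) (k : ℕ) :
    #{t ∈ Fintype.piFinset (fun _ : Fin (k + 1) => S ×ˢ (univ : Finset (ZMod 4)ˣ)) |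
        ∑ i, (t i).2 • (t i).1 = 0}
      ≤ 2 ^ (k + 1) * #{g ∈ Fintype.piFinset (fun _ : Fin k => S) | ¬ allEven (∑ i, g i)} := by
  have last_eq {t : Fin (k + 1) → (Fin n → ZMod 4) × (ZMod 4)ˣ}
      (ht : ∑ i, (t i).2 • (t i).1 = 0) :
      (t (Fin.last k)).2 • (t (Fin.last k)).1
        = -∑ i : Fin k, (t i.castSucc).2 • (t i.castSucc).1 := by
    rwa [Fin.sum_univ_castSucc, add_comm, add_eq_zero_iff_eq_neg] at ht
  calc _ ≤ #({g ∈ Fintype.piFinset (fun _ : Fin k => S) | ¬ allEven (∑ i, g i)} ×ˢ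
          (univ : Finset (Fin (k + 1) → (ZMod 4)ˣ))) := by
        refine card_le_card_of_injOn (fun t => (fun i => (t i.castSucc).1, fun i => (t i).2))
          ?_ ?_
        · intro t ht
          simp only [coe_filter, Set.mem_ofPred_eq, Fintype.mem_piFinset, mem_product] at ht
          simp only [coe_product, coe_filter, Set.mem_prod, Set.mem_ofPred_eq,
            Fintype.mem_piFinset, coe_univ, Set.mem_univ, and_true]
          refine ⟨fun i => (ht.1 i.castSucc).1, fun h => ?_⟩
          obtain ⟨j, hj⟩ := hS _ (ht.1 (Fin.last k)).1
          rw [← allEven_sum_units_smul_iff univ (fun i => (t i.castSucc).2), ← allEven_neg_iff,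
            ← last_eq ht.2, allEven_units_smul_iff] at h
          exact not_allEven_of_isOddZ4 hj h
        · intro t ht t' ht' heq
          simp only [coe_filter, Set.mem_ofPred_eq] at ht ht'
          have hg (j : Fin k) : (t j.castSucc).1 = (t' j.castSucc).1 :=
            congrFun (congrArg Prod.fst heq) j
          have he (i : Fin (k + 1)) : (t i).2 = (t' i).2 := congrFun (congrArg Prod.snd heq) i
          have hlast : (t (Fin.last k)).1 = (t' (Fin.last k)).1 := by
            rw [← smul_left_cancel_iff (t (Fin.last k)).2, last_eq ht.2, he (Fin.last k),
              last_eq ht'.2]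
            simp only [hg, he]
          funext i
          induction i using Fin.lastCases with
          | last => exact Prod.ext hlast (he _)
          | cast j => exact Prod.ext (hg j) (he _)
    _ = _ := by
      rw [card_product, card_univ, Fintype.card_fun, card_units_zmod4, Fintype.card_fin, mul_comm]

lemma card_allEven_add_card_not_allEven (k : ℕ) :
    #{g ∈ Fintype.piFinset (fun _ : Fin k => S) | allEven (∑ i, g i)}
      + #{g ∈ Fintype.piFinset (fun _ : Fin k => S) | ¬ allEven (∑ i, g i)} = #S ^ k := by
  rw [card_filter_add_card_filter_not, Fintype.card_piFinset_const]

lemma card_not_allEven_pairs_eq_zero_iff :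
    #{g ∈ Fintype.piFinset (fun _ : Fin 2 => S) | ¬ allEven (∑ i, g i)} = 0
      ↔ ∀ g ∈ S, ∀ g' ∈ S, allEven (g + g') := by
  simp only [card_eq_zero, filter_eq_empty_iff, Fintype.mem_piFinset, Fin.sum_univ_two, not_not]
  constructor
  · intro h g hg g' hg'
    simpa using h (x := ![g, g']) (Fin.forall_fin_two.2 ⟨hg, hg'⟩)
  · intro h t ht
    exact h _ (ht 0) _ (ht 1)

end Counting

end

open scoped ComplexOrder

/-- Theorem 1: F₃ ≤ 3·2^{2n+2}(v-s)², with equality iff S̄ is even. -/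
theorem theorem_one {n : ℕ} (Sb : Finset (Fin n → ZMod 4))
    (hΩ : ∀ g ∈ Sb, inOmega g) :
    (3 * 2 ^ n *
        (∑ u ∈ Finset.univ.filter (allEven (n := n)),
          (∑ g ∈ Sb, (ipow (dot4 u g) + ipow (-(dot4 u g)))) ^ 2) +
      (∑ u : Fin n → ZMod 4,
          (∑ g ∈ Sb, (ipow (dot4 u g) + ipow (-(dot4 u g)))) ^ 3)
      ≤ 3 * 2 ^ (2 * n + 2) * (Sb.card : ℂ) ^ 2) ∧
    ((3 * 2 ^ n *
        (∑ u ∈ Finset.univ.filter (allEven (n := n)),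
          (∑ g ∈ Sb, (ipow (dot4 u g) + ipow (-(dot4 u g)))) ^ 2) +
      (∑ u : Fin n → ZMod 4,
          (∑ g ∈ Sb, (ipow (dot4 u g) + ipow (-(dot4 u g)))) ^ 3)
      = 3 * 2 ^ (2 * n + 2) * (Sb.card : ℂ) ^ 2)
      ↔ ∀ g ∈ Sb, ∀ g' ∈ Sb, allEven (g + g')) := by
  simp only [sum_ipow_dot4_add_neg_eq_sum_units, sum_pow_sum_ipow_dot4,
    sum_allEven_pow_sum_ipow_dot4, card_allEven_units_smul, ← card_not_allEven_pairs_eq_zero_iff,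
    ← Nat.cast_pow, ← card_allEven_add_card_not_allEven Sb 2]
  set E := #{g ∈ Fintype.piFinset (fun _ : Fin 2 => Sb) | allEven (∑ i, g i)}
  set C := #{g ∈ Fintype.piFinset (fun _ : Fin 2 => Sb) | ¬ allEven (∑ i, g i)}
  set N := #{t ∈ Fintype.piFinset (fun _ : Fin 3 => Sb ×ˢ (univ : Finset (ZMod 4)ˣ)) |
    ∑ i, (t i).2 • (t i).1 = 0}
  have hN : N ≤ 2 ^ 3 * C :=
    card_sum_units_smul_eq_zero_le Sb (fun g hg => (hΩ g hg).imp fun _ hi => Or.inl hi.1) 2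
  have four_pow : (4 : ℂ) ^ n = 2 ^ n * 2 ^ n := by rw [← mul_pow]; norm_num
  have hF : 3 * 2 ^ n * (2 ^ n * ((2 ^ 2 * E : ℕ) : ℂ)) + 4 ^ n * (N : ℂ)
      = ((4 ^ n * (12 * E + N) : ℕ) : ℂ) := by
    push_cast
    rw [four_pow]
    ring
  have hR : 3 * 2 ^ (2 * n + 2) * ((E + C : ℕ) : ℂ) = ((4 ^ n * (12 * (E + C)) : ℕ) : ℂ) := by
    push_cast
    rw [four_pow, pow_add, two_mul, pow_add]
    ring
  rw [hF, hR, Nat.cast_le, Nat.cast_inj, Nat.mul_le_mul_left_iff (by positivity),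
    Nat.mul_right_inj (by positivity)]
  omega
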